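/- Let κ and λ be infinite cardinals with κ regular and κ ≤ λ, let X ⊆ ᵏλ be a subspace of weight at most λ, and let S be a positively totally ordered monoid with Deg(S) ≠ κ. Let (X, 𝔐, μ) be a weak λ⁺-measure space with μ taking values in S, and let U ⊆ X be an open set with μ(U) > 0. Then there is x ∈ U such that either {x} ∉ 𝔐 or μ({x}) > 0. -/

import Mathlib

/-!
Suppose every point of `U` is measurable and null. For `x ∈ U` the cones at `x` of height
`b < κ` form a neighbourhood basis, so by (M5) their measures have infimum `0`. If they were all
positive, their measures would be a coinitial subset of `S⁺` of size at most `κ`; conversely a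
coinitial subset of size `Deg(S)` reaches below cofinally many of these cones, so `κ ≤ Deg(S)`
by regularity, contradicting `Deg(S) ≠ κ`. Hence each `x ∈ U` has a null cone inside `U`.
Two cones are nested or disjoint, so the maximal null cones partition `U` into disjoint nonempty
open sets, at most `weight(X) ≤ λ` many, and (M4) gives `μ(U) = 0`.
-/

open Cardinal Set

noncomputable section

/-- The type of `ι`-indexed sequences in `A`, as a type synonym carrying the bounded topology. -/
def GSeq (ι A : Type) : Type := ι → A

/-- The bounded topology on `GSeq ι A`: the topology generated by the cones
`N_s = {y | ∀ i < b, y i = x i}`. -/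
instance GSeq.topologicalSpace (ι A : Type) [LinearOrder ι] : TopologicalSpace (GSeq ι A) :=
  TopologicalSpace.generateFrom
    {C : Set (GSeq ι A) | ∃ (x : ι → A) (b : ι), C = {y : GSeq ι A | ∀ i, i < b → y i = x i}}

/-- The weight of a topological space: the least cardinality of a basis for its topology. -/
def tweight (X : Type) [TopologicalSpace X] : Cardinal :=
  ⨅ B : {B : Set (Set X) // TopologicalSpace.IsTopologicalBasis B}, #↥(B.1)

/-- `S` is a positively totally ordered monoid (on top of given `AddMonoid` and `LinearOrder`
structures): the addition is weakly monotone in both arguments, `0` is the least element, and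
the positive cone `S⁺ = {a | 0 < a}` is nonempty. -/
structure IsPTOM (S : Type*) [AddMonoid S] [LinearOrder S] : Prop where
  add_le_add : ∀ a b c d : S, a ≤ b → c ≤ d → a + c ≤ b + d
  zero_le : ∀ a : S, 0 ≤ a
  exists_pos : ∃ a : S, 0 < a

/-- The sum of `f` over a finite set `F` of indices, taken in increasing order of the indices. -/
def finSum {ι : Type*} [LinearOrder ι] {S : Type*} [AddMonoid S] (f : ι → S) (F : Finset ι) : S :=
  ((F.sort (· ≤ ·)).map f).sum

/-- `μ` is a continuous measure: every singleton is measurable and has measure `0`. -/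
def MeasureContinuous {X : Type} [TopologicalSpace X] {S : Type*} [Zero S]
    (M : Set (Set X)) (μ : Set X → S) : Prop :=
  ∀ x : X, {x} ∈ M ∧ μ {x} = 0

/-- `(X, M, μ)` is a weak `λ⁺`-measure space (with `lam` playing the role of `λ`):
`M` contains all open sets and is closed under unions of at most `lam` many sets,
and `μ` satisfies the axioms (M1)-(M5). -/
structure IsWeakMeasureSpace (X : Type) [TopologicalSpace X] (lam : Cardinal)
    (S : Type*) [AddMonoid S] [LinearOrder S] (M : Set (Set X)) (μ : Set X → S) : Prop where
  open_mem : ∀ U : Set X, IsOpen U → U ∈ M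
  sUnion_mem : ∀ 𝒜 : Set (Set X), 𝒜 ⊆ M → #↥𝒜 ≤ lam → ⋃₀ 𝒜 ∈ M
  measure_empty : μ ∅ = 0
  measure_univ_pos : 0 < μ Set.univ
  mono : ∀ A B : Set X, A ∈ M → B ∈ M → A ⊆ B → μ A ≤ μ B
  additive : ∀ (γ : Ordinal) (A : γ.ToType → Set X), γ.card ≤ lam →
    (∀ i, A i ∈ M) → Pairwise (Function.onFun Disjoint A) →
    IsLUB {s : S | ∃ F : Finset γ.ToType, s = finSum (fun i => μ (A i)) F} (μ (⋃ i, A i))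
  point_reg : ∀ (x : X) (γ : Ordinal) (A : γ.ToType → Set X),
    {x} ∈ M → γ.card ≤ lam →
    (∀ i, IsOpen (A i) ∧ x ∈ A i) →
    (∀ U : Set X, IsOpen U → x ∈ U → ∃ i, A i ⊆ U) →
    IsGLB (Set.range fun i => μ (A i)) (μ {x})

/-- The degree of `S`: the least cardinality of a subset of the positive cone `S⁺`
that is coinitial in `S⁺`. -/
def degree (S : Type*) [Zero S] [LinearOrder S] : Cardinal :=
  ⨅ A : {A : Set S // (∀ a ∈ A, 0 < a) ∧ ∀ ε : S, 0 < ε → ∃ a ∈ A, a ≤ ε}, #↥(A.1)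

namespace GSeq

variable {ι A : Type} [LinearOrder ι]

def cone (x : GSeq ι A) (b : ι) : Set (GSeq ι A) := {y | ∀ i, i < b → y i = x i}

theorem mem_cone_self (x : GSeq ι A) (b : ι) : x ∈ cone x b := fun _ _ => rfl

theorem cone_anti (x : GSeq ι A) : Antitone (cone x) :=
  fun _ _ h _ hy i hi => hy i (hi.trans_le h)

theorem cone_eq_of_mem {x z : GSeq ι A} {b : ι} (hz : z ∈ cone x b) : cone z b = cone x b := by
  ext y
  exact forall₂_congr fun i hi => by rw [hz i hi]

theorem isOpen_cone (x : GSeq ι A) (b : ι) : IsOpen (cone x b) :=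
  TopologicalSpace.isOpen_generateFrom_of_mem ⟨x, b, rfl⟩

theorem isTopologicalBasis_cone [Nonempty ι] :
    TopologicalSpace.IsTopologicalBasis {C : Set (GSeq ι A) | ∃ x b, C = cone x b} := by
  refine ⟨?_, ?_, rfl⟩
  · rintro _ ⟨x, b, rfl⟩ _ ⟨x', b', rfl⟩ z ⟨hz, hz'⟩
    refine ⟨cone z (max b b'), ⟨z, _, rfl⟩, mem_cone_self z _, Set.subset_inter ?_ ?_⟩
    · exact (cone_anti z (le_max_left b b')).trans (cone_eq_of_mem hz).le
    · exact (cone_anti z (le_max_right b b')).trans (cone_eq_of_mem hz').le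
  · exact Set.eq_univ_of_forall fun y =>
      ⟨cone y (Classical.arbitrary ι), ⟨y, _, rfl⟩, mem_cone_self y _⟩

def subcone (X : Set (GSeq ι A)) (x : X) (b : ι) : Set X := Subtype.val ⁻¹' cone x.1 b

variable {X : Set (GSeq ι A)}

theorem mem_subcone_self (x : X) (b : ι) : x ∈ subcone X x b := mem_cone_self x.1 b

theorem subcone_anti (x : X) : Antitone (subcone X x) :=
  fun _ _ h => Set.preimage_mono (cone_anti x.1 h)

theorem subcone_eq_of_mem {x z : X} {b : ι} (hz : z ∈ subcone X x b) :
    subcone X z b = subcone X x b := by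
  rw [subcone, subcone, cone_eq_of_mem hz]

theorem subcone_subset_subcone {x x' w : X} {b b' : ι} (hb : b ≤ b')
    (hw : w ∈ subcone X x b) (hw' : w ∈ subcone X x' b') : subcone X x' b' ⊆ subcone X x b := by
  rw [← subcone_eq_of_mem hw, ← subcone_eq_of_mem hw']
  exact subcone_anti w hb

theorem isOpen_subcone (x : X) (b : ι) : IsOpen (subcone X x b) :=
  (isOpen_cone x.1 b).preimage continuous_subtype_val

theorem exists_subcone_subset [Nonempty ι] {V : Set X} (hV : IsOpen V) {x : X} (hx : x ∈ V) :
    ∃ b, subcone X x b ⊆ V := by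
  obtain ⟨W, hW, rfl⟩ := isOpen_induced_iff.1 hV
  obtain ⟨_, ⟨x', b, rfl⟩, hxC, hCW⟩ :=
    isTopologicalBasis_cone.exists_subset_of_mem_open (a := x.1) hx hW
  exact ⟨b, Set.preimage_mono ((cone_eq_of_mem hxC).symm ▸ hCW)⟩

/-- Subcones are nested or disjoint, so the chosen subcone of least height through each point
is maximal among the chosen ones, and these maximal subcones partition `U`. -/
theorem exists_pairwiseDisjoint_subcone_sUnion_eq [WellFoundedLT ι] {U : Set X} {b : X → ι}
    (hb : ∀ x ∈ U, subcone X x (b x) ⊆ U) :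
    ∃ 𝒟 : Set (Set X), 𝒟 ⊆ (fun x => subcone X x (b x)) '' U ∧
      𝒟.PairwiseDisjoint id ∧ ⋃₀ 𝒟 = U := by
  have hmin : ∀ z ∈ U, ∃ x ∈ {x | x ∈ U ∧ z ∈ subcone X x (b x)},
      ∀ x' ∈ {x | x ∈ U ∧ z ∈ subcone X x (b x)}, ¬ b x' < b x := fun z hz =>
    (InvImage.wf b wellFounded_lt).has_min _ ⟨z, hz, mem_subcone_self z _⟩
  choose! c hc hcmin using hmin
  set D : X → Set X := fun z => subcone X (c z) (b (c z))
  have hsame : ∀ z ∈ U, ∀ z' ∈ U, b (c z) ≤ b (c z') → ∀ w ∈ D z, w ∈ D z' → D z = D z' := by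
    intro z hz z' hz' hle w hw hw'
    have hz'D : z' ∈ D z := subcone_subset_subcone hle hw hw' (hc z' hz').2
    have heq : b (c z) = b (c z') := hle.antisymm (not_lt.1 (hcmin z' hz' _ ⟨(hc z hz).1, hz'D⟩))
    simp only [D, ← subcone_eq_of_mem hw, ← subcone_eq_of_mem hw', heq]
  refine ⟨D '' U, ?_, ?_, ?_⟩
  · rintro _ ⟨z, hz, rfl⟩
    exact ⟨c z, (hc z hz).1, rfl⟩
  · rintro _ ⟨z, hz, rfl⟩ _ ⟨z', hz', rfl⟩ hne
    refine Set.disjoint_left.2 fun w hw hw' => hne ?_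
    rcases le_total (b (c z)) (b (c z')) with hle | hle
    · exact hsame z hz z' hz' hle w hw hw'
    · exact (hsame z' hz' z hz hle w hw' hw).symm
  · refine subset_antisymm (Set.sUnion_subset ?_) fun z hz => ⟨D z, ⟨z, hz, rfl⟩, (hc z hz).2⟩
    rintro _ ⟨z, hz, rfl⟩
    exact hb _ (hc z hz).1

end GSeq

theorem exists_isTopologicalBasis_mk_eq_tweight (Y : Type) [TopologicalSpace Y] :
    ∃ B : Set (Set Y), TopologicalSpace.IsTopologicalBasis B ∧ #B = tweight Y := by
  have : Nonempty {B : Set (Set Y) // TopologicalSpace.IsTopologicalBasis B} :=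
    ⟨⟨_, TopologicalSpace.isTopologicalBasis_opens⟩⟩
  obtain ⟨⟨B, hB⟩, hBcard⟩ := csInf_mem (Set.range_nonempty fun B :
    {B : Set (Set Y) // TopologicalSpace.IsTopologicalBasis B} => #B.1)
  exact ⟨B, hB, hBcard⟩

theorem mk_le_tweight_of_pairwiseDisjoint {Y : Type} [TopologicalSpace Y] {𝒟 : Set (Set Y)}
    (hopen : ∀ D ∈ 𝒟, IsOpen D) (hne : ∀ D ∈ 𝒟, D.Nonempty) (hdisj : 𝒟.PairwiseDisjoint id) :
    #𝒟 ≤ tweight Y := by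
  obtain ⟨B, hB, hBcard⟩ := exists_isTopologicalBasis_mk_eq_tweight Y
  have hpick : ∀ D : 𝒟, ∃ v ∈ B, v.Nonempty ∧ v ⊆ D := fun ⟨D, hD⟩ => by
    obtain ⟨z, hz⟩ := hne D hD
    obtain ⟨v, hvB, hzv, hvD⟩ := hB.exists_subset_of_mem_open hz (hopen D hD)
    exact ⟨v, hvB, ⟨z, hzv⟩, hvD⟩
  choose v hvB hvne hvD using hpick
  refine hBcard ▸ Cardinal.mk_le_of_injective (f := fun D => (⟨v D, hvB D⟩ : B)) ?_
  intro D D' hDD'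
  obtain ⟨w, hw⟩ := hvne D
  have hvv : v D = v D' := congrArg Subtype.val hDD'
  have hw' : w ∈ v D' := hvv ▸ hw
  exact Subtype.ext (hdisj.elim_set D.2 D'.2 w (hvD D hw) (hvD D' hw'))

theorem Cardinal.IsRegular.nonempty_toType_ord {κ : Cardinal} (hκ : κ.IsRegular) :
    Nonempty κ.ord.ToType :=
  Ordinal.nonempty_toType_iff.2 (Cardinal.ord_eq_zero.not.2 hκ.pos.ne')

section Degree

universe u

variable {S : Type u} [Zero S] [LinearOrder S]

theorem degree_le_mk {A : Set S} (hpos : ∀ a ∈ A, 0 < a) (hA : ∀ ε : S, 0 < ε → ∃ a ∈ A, a ≤ ε) :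
    degree S ≤ #A :=
  ciInf_le' (fun A : {A : Set S // (∀ a ∈ A, 0 < a) ∧ ∀ ε : S, 0 < ε → ∃ a ∈ A, a ≤ ε} => #A.1)
    ⟨A, hpos, hA⟩

theorem exists_mk_eq_degree (S : Type u) [Zero S] [LinearOrder S] :
    ∃ A : Set S, (∀ a ∈ A, 0 < a) ∧ (∀ ε : S, 0 < ε → ∃ a ∈ A, a ≤ ε) ∧ #A = degree S := by
  have : Nonempty {A : Set S // (∀ a ∈ A, 0 < a) ∧ ∀ ε : S, 0 < ε → ∃ a ∈ A, a ≤ ε} :=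
    ⟨⟨{a | 0 < a}, fun _ h => h, fun ε hε => ⟨ε, hε, le_rfl⟩⟩⟩
  obtain ⟨⟨A, hpos, hA⟩, hAcard⟩ := csInf_mem (Set.range_nonempty fun A :
    {A : Set S // (∀ a ∈ A, 0 < a) ∧ ∀ ε : S, 0 < ε → ∃ a ∈ A, a ≤ ε} => #A.1)
  exact ⟨A, hpos, hA, hAcard⟩

variable {ι : Type u} {f : ι → S}

theorem degree_le_mk_of_isGLB_zero (hpos : ∀ i, 0 < f i) (hf : IsGLB (Set.range f) 0) :
    degree S ≤ #ι := by
  refine (degree_le_mk (A := Set.range f) (by rintro _ ⟨i, rfl⟩; exact hpos i) fun ε hε => ?_).trans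
    Cardinal.mk_range_le
  obtain ⟨a, ha, -, haε⟩ := hf.exists_between hε
  exact ⟨a, ha, haε.le⟩

/-- Picking for each element `a` of a coinitial subset of `S⁺` an index `i` with `f i < a`
yields a cofinal subset of `ι`. -/
theorem cof_le_degree_of_isGLB_zero [LinearOrder ι] (hf : Antitone f) (hpos : ∀ i, 0 < f i)
    (hglb : IsGLB (Set.range f) 0) : Order.cof ι ≤ degree S := by
  obtain ⟨A, hApos, hA, hAcard⟩ := exists_mk_eq_degree S
  have hpick : ∀ a : A, ∃ i, f i < a := fun a => by
    obtain ⟨_, ⟨i, rfl⟩, -, hi⟩ := hglb.exists_between (hApos a a.2)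
    exact ⟨i, hi⟩
  choose g hg using hpick
  have hcofinal : IsCofinal (Set.range g) := fun i => by
    obtain ⟨a, haA, hai⟩ := hA (f i) (hpos i)
    exact ⟨g ⟨a, haA⟩, ⟨_, rfl⟩, le_of_lt (not_le.1 fun h => (hf h).not_gt ((hg _).trans_le hai))⟩
  exact (Order.cof_le hcofinal).trans (hAcard ▸ Cardinal.mk_range_le)

theorem exists_eq_zero_of_isGLB_zero {κ : Cardinal} (hκ : κ.IsRegular) (hdeg : degree S ≠ κ)
    {f : κ.ord.ToType → S} (hf : Antitone f) (hglb : IsGLB (Set.range f) 0) : ∃ b, f b = 0 := by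
  by_contra! hne
  have hpos : ∀ b, 0 < f b := fun b => (hglb.1 ⟨b, rfl⟩).lt_of_ne' (hne b)
  refine hdeg (le_antisymm ?_ ?_)
  · exact (degree_le_mk_of_isGLB_zero hpos hglb).trans_eq (Cardinal.mk_ord_toType κ)
  · calc κ = Order.cof κ.ord.ToType := by rw [Ordinal.cof_toType, hκ.cof_ord]
      _ ≤ degree S := cof_le_degree_of_isGLB_zero hf hpos hglb

end Degree

namespace IsWeakMeasureSpace

section

variable {X : Type} [TopologicalSpace X] {lam : Cardinal} {S : Type*} [AddMonoid S] [LinearOrder S]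
  {M : Set (Set X)} {μ : Set X → S}

theorem measure_nonneg (hμ : IsWeakMeasureSpace X lam S M μ) {B : Set X} (hB : B ∈ M) :
    0 ≤ μ B :=
  hμ.measure_empty ▸ hμ.mono ∅ B (hμ.open_mem ∅ isOpen_empty) hB (Set.empty_subset B)

theorem measure_sUnion_eq_zero (hμ : IsWeakMeasureSpace X lam S M μ) {𝒜 : Set (Set X)}
    (hM : 𝒜 ⊆ M) (hcard : #𝒜 ≤ lam) (hdisj : 𝒜.PairwiseDisjoint id) (h0 : ∀ B ∈ 𝒜, μ B = 0) :
    μ (⋃₀ 𝒜) = 0 := by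
  obtain ⟨e⟩ : Nonempty ((#𝒜).ord.ToType ≃ 𝒜) := Cardinal.eq.1 (Cardinal.mk_ord_toType _)
  have hlub := hμ.additive _ (fun i => (e i : Set X)) ((Cardinal.card_ord _).trans_le hcard)
    (fun i => hM (e i).2)
    fun i j hij => hdisj (e i).2 (e j).2 fun h => hij (e.injective (Subtype.ext h))
  have hsums : {s : S | ∃ F, s = finSum (fun i => μ (e i : Set X)) F} = {0} := by
    have hzero : (fun i => μ (e i : Set X)) = fun _ => 0 := funext fun i => h0 _ (e i).2
    ext s
    simp [hzero, finSum, List.map_const']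
  have hunion : ⋃ i, (e i : Set X) = ⋃₀ 𝒜 := by
    rw [Set.sUnion_eq_iUnion]
    exact e.surjective.iUnion_comp _
  rw [hsums, hunion] at hlub
  exact hlub.unique isLUB_singleton

end

open GSeq

variable {A : Type} {lam : Cardinal} {S : Type} [AddMonoid S] [LinearOrder S]

theorem isGLB_measure_subcone {γ : Ordinal} [Nonempty γ.ToType] {X : Set (GSeq γ.ToType A)}
    {M : Set (Set X)} {μ : Set X → S} (hμ : IsWeakMeasureSpace X lam S M μ) (hγ : γ.card ≤ lam)
    {x : X} (hx : {x} ∈ M) : IsGLB (Set.range fun b => μ (subcone X x b)) (μ {x}) :=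
  hμ.point_reg x γ _ hx hγ (fun b => ⟨isOpen_subcone x b, mem_subcone_self x b⟩)
    fun _ hV hxV => exists_subcone_subset hV hxV

theorem exists_subcone_subset_measure_eq_zero {κ : Cardinal} (hκ : κ.IsRegular) (hκlam : κ ≤ lam)
    {X : Set (GSeq κ.ord.ToType A)} {M : Set (Set X)} {μ : Set X → S}
    (hμ : IsWeakMeasureSpace X lam S M μ) (hdeg : degree S ≠ κ) {U : Set X} (hU : IsOpen U)
    {x : X} (hxU : x ∈ U) (hx : {x} ∈ M) (hx0 : μ {x} = 0) :
    ∃ b, subcone X x b ⊆ U ∧ μ (subcone X x b) = 0 := by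
  have := hκ.nonempty_toType_ord
  have hglb := hμ.isGLB_measure_subcone ((Cardinal.card_ord κ).trans_le hκlam) hx
  rw [hx0] at hglb
  have hanti : Antitone fun b => μ (subcone X x b) := fun _ _ h =>
    hμ.mono _ _ (hμ.open_mem _ (isOpen_subcone x _)) (hμ.open_mem _ (isOpen_subcone x _))
      (subcone_anti x h)
  obtain ⟨b₀, hb₀⟩ := exists_subcone_subset hU hxU
  obtain ⟨b₁, hb₁⟩ := exists_eq_zero_of_isGLB_zero hκ hdeg hanti hglb
  exact ⟨max b₀ b₁, (subcone_anti x (le_max_left b₀ b₁)).trans hb₀,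
    ((hanti (le_max_right b₀ b₁)).trans_eq hb₁).antisymm (hglb.1 ⟨_, rfl⟩)⟩

end IsWeakMeasureSpace

theorem statement_5_general (κ lam : Cardinal) (hκ : κ.IsRegular) (hκlam : κ ≤ lam)
    (X : Set (GSeq κ.ord.ToType lam.ord.ToType)) (hw : tweight ↥X ≤ lam)
    (S : Type) [AddMonoid S] [LinearOrder S]
    (hdeg : degree S ≠ κ)
    (M : Set (Set ↥X)) (μ : Set ↥X → S)
    (hμ : IsWeakMeasureSpace ↥X lam S M μ)
    (U : Set ↥X) (hU : IsOpen U) (hUpos : 0 < μ U) :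
    ∃ x ∈ U, ({x} : Set ↥X) ∉ M ∨ 0 < μ {x} := by
  by_contra! hcon
  have := hκ.nonempty_toType_ord
  have hnull : ∀ x ∈ U, ∃ b, GSeq.subcone X x b ⊆ U ∧ μ (GSeq.subcone X x b) = 0 := fun x hx =>
    hμ.exists_subcone_subset_measure_eq_zero hκ hκlam hdeg hU hx (hcon x hx).1
      ((hcon x hx).2.antisymm (hμ.measure_nonneg (hcon x hx).1))
  choose! b hbU hb0 using hnull
  obtain ⟨𝒟, h𝒟, hdisj, hcover⟩ := GSeq.exists_pairwiseDisjoint_subcone_sUnion_eq hbU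
  have hopen : ∀ D ∈ 𝒟, IsOpen D := fun D hD => by
    obtain ⟨x, -, rfl⟩ := h𝒟 hD
    exact GSeq.isOpen_subcone x _
  have hne : ∀ D ∈ 𝒟, D.Nonempty := fun D hD => by
    obtain ⟨x, -, rfl⟩ := h𝒟 hD
    exact ⟨x, GSeq.mem_subcone_self x _⟩
  have hnull𝒟 : ∀ D ∈ 𝒟, μ D = 0 := fun D hD => by
    obtain ⟨x, hx, rfl⟩ := h𝒟 hD
    exact hb0 x hx
  have hcard : #𝒟 ≤ lam := (mk_le_tweight_of_pairwiseDisjoint hopen hne hdisj).trans hw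
  refine hUpos.ne' ?_
  rw [← hcover]
  exact hμ.measure_sUnion_eq_zero (fun D hD => hμ.open_mem D (hopen D hD)) hcard hdisj hnull𝒟

/-- if `Deg(S) ≠ κ` and `(X, 𝔐, μ)` is a weak `λ⁺`-measure space on some
`X ⊆ ᵏλ` of weight at most `λ`, then every open `U` of positive measure contains a point that
is either non-measurable or of positive measure. -/
theorem statement_5 (κ lam : Cardinal) (hκ : κ.IsRegular) (hκlam : κ ≤ lam) (hlam : ℵ₀ ≤ lam)
    (X : Set (GSeq κ.ord.ToType lam.ord.ToType)) (hw : tweight ↥X ≤ lam)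
    (S : Type) [AddMonoid S] [LinearOrder S] (hS : IsPTOM S)
    (hdeg : degree S ≠ κ)
    (M : Set (Set ↥X)) (μ : Set ↥X → S)
    (hμ : IsWeakMeasureSpace ↥X lam S M μ)
    (U : Set ↥X) (hU : IsOpen U) (hUpos : 0 < μ U) :
    ∃ x ∈ U, ({x} : Set ↥X) ∉ M ∨ 0 < μ {x} :=
  statement_5_general κ lam hκ hκlam X hw S hdeg M μ hμ U hU hUpos
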